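/- Fix d ≥ 1 and 0 ≤ p₁ < p₂ ≤ 1. Let R(x,d,p) denote the probability that the random walk on ℤ^d ∪ {Δ} started at x (moving to each of 2d neighbors with probability p/(2d), absorbed at Δ with probability 1-p) ever hits the origin O. Then for every x ∈ ℤ^d, 0 ≤ R(x,d,p₂) - R(x,d,p₁) ≤ (p₂ - p₁)/(1 - p₁). In particular, p ↦ R(x,d,p) is continuous on [0,1). -/
import Mathlib


open Set

/-- `x` and `y` are nearest neighbors in `ℤ^d`. -/
def adjZ {d : ℕ} (x y : Fin d → ℤ) : Prop := (∑ i, |x i - y i|) = 1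

/-- Number of `n`-step nearest-neighbor paths in `ℤ^d` from `x` to the origin that
hit the origin for the first time at step `n`. -/
noncomputable def firstHitCount (d n : ℕ) (x : Fin d → ℤ) : ℕ :=
  Nat.card {f : Fin (n + 1) → Fin d → ℤ //
    f 0 = x ∧ (∀ i : Fin n, adjZ (f i.castSucc) (f i.succ)) ∧
    f (Fin.last n) = 0 ∧ ∀ i : Fin (n + 1), i ≠ Fin.last n → f i ≠ 0}

/-- `R(x,d,p)`: the probability that the random walk on `ℤ^d ∪ {Δ}` started at `x`,
which moves to each of the `2d` neighbors with probability `p/(2d)` and is absorbed at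
`Δ` with probability `1-p`, ever hits the origin. -/
noncomputable def hitProb (d : ℕ) (x : Fin d → ℤ) (p : ℝ) : ℝ :=
  ∑' n : ℕ, (firstHitCount d n x : ℝ) * (p / (2 * d)) ^ n

namespace Stmt4


abbrev Pt (d : ℕ) := Fin d → ℤ

def UnitV (d : ℕ) := {v : Pt d // (∑ i, |v i|) = 1}

def emb (d : ℕ) (p : Fin d × Bool) : Pt d :=
  fun j => if j = p.1 then (if p.2 then 1 else -1) else 0

lemma emb_mem (d : ℕ) (p : Fin d × Bool) : (∑ i, |emb d p i|) = 1 := by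
  have : ∀ i, |emb d p i| = if i = p.1 then 1 else 0 := by
    intro i
    unfold emb
    by_cases h : i = p.1 <;> by_cases hb : p.2 <;> simp [h, hb]
  simp [this]

lemma emb_bij (d : ℕ) :
    Function.Bijective (fun p => (⟨emb d p, emb_mem d p⟩ : UnitV d)) := by
  constructor
  · rintro ⟨i, b⟩ ⟨i', b'⟩ h
    have h1 : emb d (i, b) = emb d (i', b') := congrArg Subtype.val h
    have h2 := congrFun h1 i
    unfold emb at h2
    by_cases hii : i = i'
    · subst hii
      simp only [if_pos rfl] at h2
      by_cases hb : b <;> by_cases hb' : b' <;> simp [hb, hb'] at h2 ⊢ <;> omega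
    · simp only [if_pos rfl, if_neg hii] at h2
      by_cases hb : b <;> simp [hb] at h2
  · rintro ⟨v, hv⟩
    have hex : ∃ i, 0 < |v i| := by
      by_contra hc
      push_neg at hc
      have : (∑ i, |v i|) ≤ 0 := Finset.sum_nonpos fun i _ => hc i
      omega
    obtain ⟨i, hi⟩ := hex
    have hsplit := Finset.add_sum_erase Finset.univ (fun j => |v j|) (Finset.mem_univ i)
    rw [hv] at hsplit
    have hrest : (0:ℤ) ≤ ∑ j ∈ Finset.univ.erase i, |v j| :=
      Finset.sum_nonneg fun j _ => abs_nonneg _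
    have hvi : |v i| = 1 := by omega
    have hzero : ∀ j, j ≠ i → v j = 0 := by
      intro j hj
      have h0 : ∑ j ∈ Finset.univ.erase i, |v j| = 0 := by omega
      have := (Finset.sum_eq_zero_iff_of_nonneg fun j _ => abs_nonneg (v j)).mp h0 j
        (Finset.mem_erase.mpr ⟨hj, Finset.mem_univ j⟩)
      exact abs_eq_zero.mp this
    rcases abs_eq (by norm_num : (0:ℤ) ≤ 1) |>.mp hvi with h1 | h1
    · exact ⟨(i, true), Subtype.ext (funext fun j => by
        by_cases hj : j = i
        · subst hj; simp [emb, h1]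
        · simp [emb, hj, hzero j hj])⟩
    · exact ⟨(i, false), Subtype.ext (funext fun j => by
        by_cases hj : j = i
        · subst hj; simp [emb, h1]
        · simp [emb, hj, hzero j hj])⟩

instance (d : ℕ) : Finite (UnitV d) := Finite.of_surjective _ (emb_bij d).2

lemma card_UnitV (d : ℕ) : Nat.card (UnitV d) = 2 * d := by
  refine (Nat.card_eq_of_bijective _ (emb_bij d)).symm.trans ?_
  simp [Nat.card_eq_fintype_card, mul_comm]
def Walk (d N : ℕ) (x : Pt d) :=
  {f : Fin (N + 1) → Pt d // f 0 = x ∧ ∀ i : Fin N, adjZ (f i.castSucc) (f i.succ)}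

/-- partial sums of steps -/
def psum {d N : ℕ} (x : Pt d) (g : Fin N → UnitV d) : Fin (N + 1) → Pt d :=
  fun k => x + ∑ i ∈ Finset.range (k : ℕ),
    (if h : i < N then (g ⟨i, h⟩).1 else 0)

lemma psum_zero {d N : ℕ} (x : Pt d) (g : Fin N → UnitV d) : psum x g 0 = x := by
  simp [psum]

lemma psum_step {d N : ℕ} (x : Pt d) (g : Fin N → UnitV d) (i : Fin N) :
    psum x g i.succ = psum x g i.castSucc + (g i).1 := by
  unfold psum
  rw [Fin.val_succ, Fin.coe_castSucc, Finset.sum_range_succ, dif_pos i.isLt, Fin.eta]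
  ring

def stepsOf {d N : ℕ} {x : Pt d} (f : Walk d N x) (i : Fin N) : UnitV d :=
  ⟨f.1 i.succ - f.1 i.castSucc, by
    have h := f.2.2 i
    unfold adjZ at h
    calc (∑ j, |(f.1 i.succ - f.1 i.castSucc) j|)
        = ∑ j, |f.1 i.castSucc j - f.1 i.succ j| := by
          apply Finset.sum_congr rfl; intro j _; rw [Pi.sub_apply, abs_sub_comm]
      _ = 1 := h⟩

lemma psum_stepsOf {d N : ℕ} {x : Pt d} (f : Walk d N x) (k : Fin (N + 1)) :
    psum x (stepsOf f) k = f.1 k := by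
  induction k using Fin.induction with
  | zero => rw [psum_zero]; exact f.2.1.symm
  | succ i ih =>
    rw [psum_step, ih]
    simp [stepsOf]

noncomputable def walkEquiv (d N : ℕ) (x : Pt d) : Walk d N x ≃ (Fin N → UnitV d) where
  toFun := stepsOf
  invFun g := ⟨psum x g, psum_zero x g, by
    intro i
    unfold adjZ
    rw [psum_step]
    have : ∀ j, |psum x g i.castSucc j - (psum x g i.castSucc + (g i).1) j| = |(g i).1 j| := by
      intro j; rw [Pi.add_apply]; rw [show psum x g i.castSucc j - (psum x g i.castSucc j + (g i).1 j) = -((g i).1 j) by ring, abs_neg]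
    rw [Finset.sum_congr rfl (fun j _ => this j)]
    exact (g i).2⟩
  left_inv f := Subtype.ext (funext fun k => psum_stepsOf f k)
  right_inv g := by
    funext i
    apply Subtype.ext
    show psum x g i.succ - psum x g i.castSucc = (g i).1
    rw [psum_step]
    abel

instance (d N : ℕ) (x : Pt d) : Finite (Walk d N x) :=
  Finite.of_equiv _ (walkEquiv d N x).symm

lemma card_Walk (d N : ℕ) (x : Pt d) : Nat.card (Walk d N x) = (2 * d) ^ N := by
  rw [Nat.card_congr (walkEquiv d N x), Nat.card_pi]
  simp [card_UnitV]
def FH (d n : ℕ) (x : Pt d) :=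
  {f : Fin (n + 1) → Pt d //
    f 0 = x ∧ (∀ i : Fin n, adjZ (f i.castSucc) (f i.succ)) ∧
    f (Fin.last n) = 0 ∧ ∀ i : Fin (n + 1), i ≠ Fin.last n → f i ≠ 0}

def toWalk {d n : ℕ} {x : Pt d} (f : FH d n x) : Walk d n x := ⟨f.1, f.2.1, f.2.2.1⟩

instance (d n : ℕ) (x : Pt d) : Finite (FH d n x) :=
  Finite.of_injective toWalk (fun a b h => Subtype.ext (congrArg (fun w : Walk _ _ _ => w.1) h))

/-- the concatenated path -/
def cf {d N : ℕ} {x : Pt d} (n : Fin (N + 1)) (f : FH d n.val x)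
    (g : Walk d (N - n.val) 0) : Fin (N + 1) → Pt d :=
  fun k => if hk : (k : ℕ) ≤ (n : ℕ) then f.1 ⟨(k : ℕ), by omega⟩
    else g.1 ⟨(k : ℕ) - (n : ℕ), by have := k.isLt; omega⟩

lemma cf_of_le {d N : ℕ} {x : Pt d} (n : Fin (N + 1)) (f : FH d n.val x)
    (g : Walk d (N - n.val) 0) (k : Fin (N + 1)) (h : (k : ℕ) ≤ (n : ℕ))
    (h2 : (k : ℕ) < (n : ℕ) + 1) :
    cf n f g k = f.1 ⟨(k : ℕ), h2⟩ := dif_pos h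

lemma cf_of_gt {d N : ℕ} {x : Pt d} (n : Fin (N + 1)) (f : FH d n.val x)
    (g : Walk d (N - n.val) 0) (k : Fin (N + 1)) (h : (n : ℕ) < (k : ℕ))
    (h2 : (k : ℕ) - (n : ℕ) < N - (n : ℕ) + 1) :
    cf n f g k = g.1 ⟨(k : ℕ) - (n : ℕ), h2⟩ := dif_neg (by omega)

def concat {d N : ℕ} {x : Pt d} (n : Fin (N + 1)) (f : FH d n.val x)
    (g : Walk d (N - n.val) 0) : Walk d N x := by
  refine ⟨cf n f g, ?_, ?_⟩
  · rw [cf_of_le n f g 0 (by simp) (by simp)]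
    have e : (⟨((0 : Fin (N+1)) : ℕ), by simp⟩ : Fin ((n : ℕ) + 1)) = 0 := Fin.ext (by simp)
    rw [e]
    exact f.2.1
  · intro i
    rcases lt_trichotomy ((i : ℕ) + 1) ((n : ℕ) + 1) with hc | hc | hc
    · -- i + 1 ≤ n
      have hin : (i : ℕ) < (n : ℕ) := by omega
      have e1 : cf n f g i.castSucc = f.1 (Fin.castSucc ⟨(i : ℕ), hin⟩) := by
        rw [cf_of_le n f g i.castSucc
          (by simp only [Fin.coe_castSucc]; omega) (by simp only [Fin.coe_castSucc]; omega)]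
        exact congrArg f.1 (Fin.ext rfl)
      have e2 : cf n f g i.succ = f.1 (Fin.succ ⟨(i : ℕ), hin⟩) := by
        rw [cf_of_le n f g i.succ
          (by simp only [Fin.val_succ]; omega) (by simp only [Fin.val_succ]; omega)]
        exact congrArg f.1 (Fin.ext rfl)
      rw [e1, e2]
      exact f.2.2.1 ⟨(i : ℕ), hin⟩
    · -- i = n
      have hi : (i : ℕ) = (n : ℕ) := by omega
      have h0 : 0 < N - (n : ℕ) := by have := i.isLt; omega
      have e1 : cf n f g i.castSucc = f.1 (Fin.last (n : ℕ)) := by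
        rw [cf_of_le n f g i.castSucc
          (by simp only [Fin.coe_castSucc]; omega) (by simp only [Fin.coe_castSucc]; omega)]
        exact congrArg f.1 (Fin.ext (by simp only [Fin.coe_castSucc, Fin.val_last]; omega))
      have e2 : cf n f g i.succ = g.1 (Fin.succ ⟨0, h0⟩) := by
        rw [cf_of_gt n f g i.succ
          (by simp only [Fin.val_succ]; omega)
          (by simp only [Fin.val_succ]; have := i.isLt; omega)]
        exact congrArg g.1 (Fin.ext (by simp only [Fin.val_succ]; omega))
      have e4 : g.1 (Fin.castSucc ⟨0, h0⟩) = 0 := by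
        rw [show Fin.castSucc ⟨0, h0⟩ = 0 from Fin.ext (by simp)]
        exact g.2.1
      have hadj := g.2.2 ⟨0, h0⟩
      rw [e4] at hadj
      rw [e1, e2, f.2.2.2.1]
      exact hadj
    · -- n < i
      have hin : (i : ℕ) - (n : ℕ) < N - (n : ℕ) := by have := i.isLt; omega
      have e1 : cf n f g i.castSucc = g.1 (Fin.castSucc ⟨(i : ℕ) - (n : ℕ), hin⟩) := by
        rw [cf_of_gt n f g i.castSucc
          (by simp only [Fin.coe_castSucc]; omega)
          (by simp only [Fin.coe_castSucc]; have := i.isLt; omega)]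
        exact congrArg g.1 (Fin.ext rfl)
      have e2 : cf n f g i.succ = g.1 (Fin.succ ⟨(i : ℕ) - (n : ℕ), hin⟩) := by
        rw [cf_of_gt n f g i.succ
          (by simp only [Fin.val_succ]; omega)
          (by simp only [Fin.val_succ]; have := i.isLt; omega)]
        exact congrArg g.1 (Fin.ext (by simp only [Fin.val_succ]; omega))
      rw [e1, e2]
      exact g.2.2 ⟨(i : ℕ) - (n : ℕ), hin⟩

lemma concat_not_lt {d N : ℕ} {x : Pt d} {n n' : Fin (N + 1)}
    {f : FH d n.val x} {g : Walk d (N - n.val) 0}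
    {f' : FH d n'.val x} {g' : Walk d (N - n'.val) 0}
    (h : cf n f g = cf n' f' g') : ¬ ((n : ℕ) < (n' : ℕ)) := by
  intro hlt
  have hK := congrFun h ⟨(n : ℕ), n.isLt⟩
  have hv : ((⟨(n : ℕ), n.isLt⟩ : Fin (N + 1)) : ℕ) = (n : ℕ) := rfl
  rw [cf_of_le n f g _ (by rw [hv]) (by rw [hv]; omega)] at hK
  rw [cf_of_le n' f' g' _ (by rw [hv]; omega) (by rw [hv]; omega)] at hK
  rw [show (⟨((⟨(n : ℕ), n.isLt⟩ : Fin (N + 1)) : ℕ), by rw [hv]; omega⟩ : Fin ((n : ℕ) + 1))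
      = Fin.last (n : ℕ) from Fin.ext (by rw [Fin.val_last]), f.2.2.2.1] at hK
  exact f'.2.2.2.2 _
    (fun hcon => by have := congrArg Fin.val hcon; simp only [Fin.val_last] at this; omega)
    hK.symm

lemma concat_injective (d N : ℕ) (x : Pt d) :
    Function.Injective (fun t : (Σ n : Fin (N + 1), FH d n.val x × Walk d (N - n.val) 0) =>
      concat t.1 t.2.1 t.2.2) := by
  rintro ⟨n, f, g⟩ ⟨n', f', g'⟩ h
  have hval : cf n f g = cf n' f' g' := congrArg Subtype.val h
  have hnn : n = n' := by
    have h1 := concat_not_lt hval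
    have h2 := concat_not_lt hval.symm
    exact Fin.ext (by omega)
  subst hnn
  have hf : f = f' := by
    apply Subtype.ext
    funext i
    have hlt : (i : ℕ) < N + 1 := by have := i.isLt; have := n.isLt; omega
    have hK := congrFun hval ⟨(i : ℕ), hlt⟩
    have hv : ((⟨(i : ℕ), hlt⟩ : Fin (N + 1)) : ℕ) = (i : ℕ) := rfl
    rw [cf_of_le n f g _ (by rw [hv]; have := i.isLt; omega) (by rw [hv]; exact i.isLt),
        cf_of_le n f' g' _ (by rw [hv]; have := i.isLt; omega) (by rw [hv]; exact i.isLt)] at hK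
    exact hK
  have hg : g = g' := by
    apply Subtype.ext
    funext j
    by_cases hj : (j : ℕ) = 0
    · have e : j = 0 := Fin.ext (by rw [hj, Fin.val_zero])
      rw [e, g.2.1, g'.2.1]
    · have hjn : (n : ℕ) + (j : ℕ) < N + 1 := by have := j.isLt; have := n.isLt; omega
      have hK := congrFun hval ⟨(n : ℕ) + (j : ℕ), hjn⟩
      have hv : ((⟨(n : ℕ) + (j : ℕ), hjn⟩ : Fin (N + 1)) : ℕ) = (n : ℕ) + (j : ℕ) := rfl
      rw [cf_of_gt n f g _ (by rw [hv]; omega) (by rw [hv]; have := j.isLt; omega),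
          cf_of_gt n f' g' _ (by rw [hv]; omega) (by rw [hv]; have := j.isLt; omega)] at hK
      have pf : (n : ℕ) + (j : ℕ) - (n : ℕ) < N - (n : ℕ) + 1 := by have := j.isLt; omega
      have h₁ : j = (⟨(n : ℕ) + (j : ℕ) - (n : ℕ), pf⟩ : Fin (N - (n : ℕ) + 1)) :=
        Fin.ext (by show (j : ℕ) = (n : ℕ) + (j : ℕ) - (n : ℕ); omega)
      exact (congrArg g.1 h₁).trans (hK.trans (congrArg g'.1 h₁.symm))
  rw [hf, hg]

lemma nat_card_sigma {ι : Type*} [Fintype ι] (β : ι → Type*) [∀ i, Finite (β i)] :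
    Nat.card (Σ i, β i) = ∑ i, Nat.card (β i) := by
  letI : ∀ i, Fintype (β i) := fun i => Fintype.ofFinite (β i)
  simp [Nat.card_eq_fintype_card]

lemma key (d N : ℕ) (x : Pt d) :
    ∑ n ∈ Finset.range (N + 1), Nat.card (FH d n x) * (2 * d) ^ (N - n) ≤ (2 * d) ^ N := by
  have h1 : Nat.card (Σ n : Fin (N + 1), FH d n.val x × Walk d (N - n.val) 0)
      ≤ Nat.card (Walk d N x) :=
    Nat.card_le_card_of_injective _ (concat_injective d N x)
  rw [card_Walk, nat_card_sigma] at h1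
  calc ∑ n ∈ Finset.range (N + 1), Nat.card (FH d n x) * (2 * d) ^ (N - n)
      = ∑ n : Fin (N + 1), Nat.card (FH d n.val x) * (2 * d) ^ (N - n.val) := by
        rw [Finset.sum_range fun n => Nat.card (FH d n x) * (2 * d) ^ (N - n)]
    _ = ∑ n : Fin (N + 1), Nat.card (FH d n.val x × Walk d (N - n.val) 0) := by
        apply Finset.sum_congr rfl
        intro n _
        rw [Nat.card_prod, card_Walk]
    _ ≤ (2 * d) ^ N := h1

lemma firstHitCount_eq (d n : ℕ) (x : Pt d) : firstHitCount d n x = Nat.card (FH d n x) := rfl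

lemma partial_sum_le (d : ℕ) (hd : 1 ≤ d) (x : Pt d) (N : ℕ) :
    ∑ n ∈ Finset.range N, (firstHitCount d n x : ℝ) / (2 * (d : ℝ)) ^ n ≤ 1 := by
  have hd1 : (1 : ℝ) ≤ (d : ℝ) := by exact_mod_cast hd
  have h2d : (0 : ℝ) < 2 * (d : ℝ) := by linarith
  have hle : ∑ n ∈ Finset.range N, (firstHitCount d n x : ℝ) / (2 * (d : ℝ)) ^ n
      ≤ ∑ n ∈ Finset.range (N + 1), (firstHitCount d n x : ℝ) / (2 * (d : ℝ)) ^ n :=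
    Finset.sum_le_sum_of_subset_of_nonneg (Finset.range_subset_range.mpr (by omega))
      (fun i _ _ => by positivity)
  refine hle.trans ?_
  have hkey : (∑ n ∈ Finset.range (N + 1), (firstHitCount d n x : ℝ) / (2 * (d : ℝ)) ^ n)
      * (2 * (d : ℝ)) ^ N ≤ (2 * (d : ℝ)) ^ N := by
    rw [Finset.sum_mul]
    have hcong : ∀ n ∈ Finset.range (N + 1),
        (firstHitCount d n x : ℝ) / (2 * (d : ℝ)) ^ n * (2 * (d : ℝ)) ^ N
        = (firstHitCount d n x : ℝ) * (2 * (d : ℝ)) ^ (N - n) := by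
      intro n hn
      rw [pow_sub₀ _ (ne_of_gt h2d) (Nat.lt_succ_iff.mp (Finset.mem_range.mp hn))]
      field_simp
    rw [Finset.sum_congr rfl hcong]
    calc ∑ n ∈ Finset.range (N + 1), (firstHitCount d n x : ℝ) * (2 * (d : ℝ)) ^ (N - n)
        = ((∑ n ∈ Finset.range (N + 1), Nat.card (FH d n x) * (2 * d) ^ (N - n) : ℕ) : ℝ) := by
          push_cast [firstHitCount_eq]
          rfl
      _ ≤ (((2 * d) ^ N : ℕ) : ℝ) := by exact_mod_cast key d N x
      _ = (2 * (d : ℝ)) ^ N := by push_cast; ring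
  have hpow : (0 : ℝ) < (2 * (d : ℝ)) ^ N := pow_pos h2d N
  refine le_of_mul_le_mul_right ?_ hpow
  rw [one_mul]
  exact hkey

lemma main_ineq (d : ℕ) (hd : 1 ≤ d) (p₁ p₂ : ℝ) (hp0 : 0 ≤ p₁) (hp12 : p₁ < p₂)
    (hp2 : p₂ ≤ 1) (x : Pt d) :
    0 ≤ hitProb d x p₂ - hitProb d x p₁ ∧
    hitProb d x p₂ - hitProb d x p₁ ≤ (p₂ - p₁) / (1 - p₁) := by
  have hp1lt : p₁ < 1 := lt_of_lt_of_le hp12 hp2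
  have hp20 : 0 ≤ p₂ := le_of_lt (lt_of_le_of_lt hp0 hp12)
  set a : ℕ → ℝ := fun n => (firstHitCount d n x : ℝ) / (2 * (d : ℝ)) ^ n with ha
  have ha0 : ∀ n, 0 ≤ a n := fun n => by positivity
  have hsum : Summable a := summable_of_sum_range_le ha0 (partial_sum_le d hd x)
  have htsum : ∑' n, a n ≤ 1 := Summable.tsum_le_of_sum_range_le hsum (partial_sum_le d hd x)
  have hrw : ∀ p : ℝ, hitProb d x p = ∑' n, a n * p ^ n := by
    intro p
    apply tsum_congr
    intro n
    rw [ha, div_pow]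
    ring
  have hsummp : ∀ p : ℝ, 0 ≤ p → p ≤ 1 → Summable (fun n => a n * p ^ n) := by
    intro p h0 h1
    exact Summable.of_nonneg_of_le (fun n => by positivity)
      (fun n => mul_le_of_le_one_right (ha0 n) (pow_le_one₀ h0 h1)) hsum
  have hs₂ := hsummp p₂ hp20 hp2
  have hs₁ := hsummp p₁ hp0 hp1lt.le
  have hdiff : hitProb d x p₂ - hitProb d x p₁ = ∑' n, (a n * p₂ ^ n - a n * p₁ ^ n) := by
    rw [hrw p₂, hrw p₁, Summable.tsum_sub hs₂ hs₁]
  set M : ℝ := (p₂ - p₁) / (1 - p₁) with hM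
  have hMnn : 0 ≤ M := div_nonneg (by linarith) (by linarith)
  have hgeo : ∀ n : ℕ, ∑ i ∈ Finset.range n, p₁ ^ i ≤ 1 / (1 - p₁) := by
    intro n
    rw [le_div_iff₀ (by linarith)]
    have hgm : (∑ i ∈ Finset.range n, p₁ ^ i) * (1 - p₁) = 1 - p₁ ^ n := by
      linear_combination -(geom_sum_mul p₁ n)
    have := pow_nonneg hp0 n
    linarith
  have hterm : ∀ n : ℕ, p₂ ^ n - p₁ ^ n ≤ M := by
    intro n
    have h2 := geom_sum₂_mul p₂ p₁ n
    rw [← h2]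
    have hS2 : ∑ i ∈ Finset.range n, p₂ ^ i * p₁ ^ (n - 1 - i) ≤ 1 / (1 - p₁) := by
      calc ∑ i ∈ Finset.range n, p₂ ^ i * p₁ ^ (n - 1 - i)
          ≤ ∑ i ∈ Finset.range n, p₁ ^ (n - 1 - i) :=
            Finset.sum_le_sum (fun i _ =>
              mul_le_of_le_one_left (pow_nonneg hp0 _) (pow_le_one₀ hp20 hp2))
        _ = ∑ i ∈ Finset.range n, p₁ ^ i := Finset.sum_range_reflect (fun i => p₁ ^ i) n
        _ ≤ 1 / (1 - p₁) := hgeo n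
    calc (∑ i ∈ Finset.range n, p₂ ^ i * p₁ ^ (n - 1 - i)) * (p₂ - p₁)
        ≤ (1 / (1 - p₁)) * (p₂ - p₁) :=
          mul_le_mul_of_nonneg_right hS2 (by linarith)
      _ = M := by rw [hM]; ring
  constructor
  · rw [hdiff]
    exact tsum_nonneg (fun n => sub_nonneg.2
      (mul_le_mul_of_nonneg_left (pow_le_pow_left₀ hp0 hp12.le n) (ha0 n)))
  · rw [hdiff]
    calc ∑' n, (a n * p₂ ^ n - a n * p₁ ^ n)
        ≤ ∑' n, a n * M := by
          refine Summable.tsum_le_tsum (fun n => ?_) (hs₂.sub hs₁) (hsum.mul_right M)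
          rw [← mul_sub]
          exact mul_le_mul_of_nonneg_left (hterm n) (ha0 n)
      _ = (∑' n, a n) * M := tsum_mul_right
      _ ≤ 1 * M := mul_le_mul_of_nonneg_right htsum hMnn
      _ = M := one_mul M


lemma cont (d : ℕ) (hd : 1 ≤ d) (x : Pt d) :
    ContinuousOn (fun p => hitProb d x p) (Set.Ico (0 : ℝ) 1) := by
  intro p hp
  obtain ⟨hp0, hp1⟩ := hp
  set r : ℝ := (1 + p) / 2 with hr
  have hr1 : r < 1 := by rw [hr]; linarith
  have hpr : p < r := by rw [hr]; linarith
  have hrpos : 0 < 1 - r := by linarith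
  have hlip : LipschitzOnWith (Real.toNNReal (1 / (1 - r))) (fun q => hitProb d x q)
      (Set.Icc 0 r) := by
    apply LipschitzOnWith.of_dist_le_mul
    have key : ∀ q₁ ∈ Set.Icc (0:ℝ) r, ∀ q₂ ∈ Set.Icc (0:ℝ) r, q₁ ≤ q₂ →
        dist (hitProb d x q₁) (hitProb d x q₂) ≤ (1 / (1 - r)) * dist q₁ q₂ := by
      intro q₁ h₁ q₂ h₂ hle
      rcases eq_or_lt_of_le hle with rfl | hlt
      · simp
      · obtain ⟨hm1, hm2⟩ :=
          main_ineq d hd q₁ q₂ h₁.1 hlt (le_of_lt (lt_of_le_of_lt h₂.2 hr1)) x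
        rw [dist_comm, Real.dist_eq, Real.dist_eq, abs_of_nonneg hm1, abs_sub_comm q₁ q₂,
          abs_of_nonneg (by linarith : (0:ℝ) ≤ q₂ - q₁)]
        calc hitProb d x q₂ - hitProb d x q₁ ≤ (q₂ - q₁) / (1 - q₁) := hm2
          _ ≤ (q₂ - q₁) / (1 - r) :=
            div_le_div_of_nonneg_left (by linarith) hrpos (by linarith [h₁.2])
          _ = 1 / (1 - r) * (q₂ - q₁) := by ring
    intro q₁ h₁ q₂ h₂
    rw [Real.coe_toNNReal _ (by positivity)]
    rcases le_total q₁ q₂ with h | h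
    · exact key q₁ h₁ q₂ h₂ h
    · rw [dist_comm (hitProb d x q₁), dist_comm q₁]
      exact key q₂ h₂ q₁ h₁ h
  have hmem : Set.Icc (0:ℝ) r ∈ nhdsWithin p (Set.Ico (0:ℝ) 1) := by
    apply Filter.mem_of_superset (inter_mem_nhdsWithin (Set.Ico (0:ℝ) 1) (Iio_mem_nhds hpr))
    rintro q ⟨⟨hq0, _⟩, hq⟩
    exact ⟨hq0, le_of_lt hq⟩
  exact ((hlip.continuousOn).continuousWithinAt ⟨hp0, hpr.le⟩).mono_of_mem_nhdsWithin hmem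

end Stmt4

/-- Lemma 4.5: for `0 ≤ p₁ < p₂ ≤ 1`,
`0 ≤ R(x,d,p₂) - R(x,d,p₁) ≤ (p₂ - p₁)/(1 - p₁)` for every `x ∈ ℤ^d`; in particular
`p ↦ R(x,d,p)` is continuous on `[0,1)`. -/
theorem stmt_4 (d : ℕ) (hd : 1 ≤ d) :
    (∀ p₁ p₂ : ℝ, 0 ≤ p₁ → p₁ < p₂ → p₂ ≤ 1 → ∀ x : Fin d → ℤ,
      0 ≤ hitProb d x p₂ - hitProb d x p₁ ∧
      hitProb d x p₂ - hitProb d x p₁ ≤ (p₂ - p₁) / (1 - p₁)) ∧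
    (∀ x : Fin d → ℤ, ContinuousOn (fun p => hitProb d x p) (Set.Ico (0 : ℝ) 1)) := by
  constructor
  · intro p₁ p₂ h0 h12 h2 x
    exact Stmt4.main_ineq d hd p₁ p₂ h0 h12 h2 x
  · intro x
    exact Stmt4.cont d hd x
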